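/- arXiv:1012.3716 — 2 statements merged into one kernel-verified Lean document; each statement's English description precedes it below -/
import Mathlib

section
/- The function φ(p) = min{ p/3, p/(1+4p), (1−p)/2 } on [0,1] satisfies φ(p) ≤ (7−√17)/16 for all p ∈ [0,1], with equality if and only if p = (1+√17)/8. -/
/-- The edit distance function of `Forb(H₉)`. -/
noncomputable def phiH9 (p : ℝ) : ℝ :=
  min (p / 3) (min (p / (1 + 4 * p)) ((1 - p) / 2))

/-!
`phiH9` lies below the increasing branch `p / (1 + 4p)` and below the decreasing branch
`(1 - p) / 2`. The two branches cross at the positive root `p⋆ = (1 + √17) / 8` of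
`4p² - p - 1`, where both equal `(7 - √17) / 16` and `p / 3` is larger; so `phiH9` is strictly
below that value to the left of `p⋆` (first branch), strictly below it to the right (second
branch), and attains it at `p⋆`.
-/

theorem strictMonoOn_div_one_add_four_mul :
    StrictMonoOn (fun p : ℝ => p / (1 + 4 * p)) (Set.Ici 0) := by
  intro p hp q hq hpq
  simp only [Set.mem_Ici] at hp hq
  rw [div_lt_div_iff₀ (by linarith) (by linarith)]
  linarith

theorem phiH9_le_div_one_add_four_mul (p : ℝ) : phiH9 p ≤ p / (1 + 4 * p) :=
  (min_le_right _ _).trans (min_le_left _ _)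

theorem phiH9_le_one_sub_div_two (p : ℝ) : phiH9 p ≤ (1 - p) / 2 :=
  (min_le_right _ _).trans (min_le_right _ _)

section Peak

open Real

theorem four_lt_sqrt_seventeen : 4 < √17 := by
  rw [show (4 : ℝ) = √(4 ^ 2) by simp]
  exact sqrt_lt_sqrt (by norm_num) (by norm_num)

theorem peak_div_one_add_four_mul :
    (1 + √17) / 8 / (1 + 4 * ((1 + √17) / 8)) = (7 - √17) / 16 := by
  have hsq : √17 ^ 2 = 17 := sq_sqrt (by norm_num)
  rw [div_eq_div_iff (by positivity) (by norm_num)]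
  linear_combination hsq / 2

theorem peak_one_sub_div_two : (1 - (1 + √17) / 8) / 2 = (7 - √17) / 16 := by ring

theorem phiH9_peak : phiH9 ((1 + √17) / 8) = (7 - √17) / 16 := by
  have hthird : (7 - √17) / 16 ≤ (1 + √17) / 8 / 3 := by
    linarith [four_lt_sqrt_seventeen]
  rw [phiH9, peak_div_one_add_four_mul, peak_one_sub_div_two, min_self, min_eq_right hthird]

theorem phiH9_lt_of_lt_peak {p : ℝ} (hp : 0 ≤ p) (h : p < (1 + √17) / 8) :
    phiH9 p < (7 - √17) / 16 :=
  calc phiH9 p ≤ p / (1 + 4 * p) := phiH9_le_div_one_add_four_mul p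
    _ < (1 + √17) / 8 / (1 + 4 * ((1 + √17) / 8)) :=
      strictMonoOn_div_one_add_four_mul hp (Set.mem_Ici.2 (by positivity)) h
    _ = (7 - √17) / 16 := peak_div_one_add_four_mul

theorem phiH9_lt_of_peak_lt {p : ℝ} (h : (1 + √17) / 8 < p) : phiH9 p < (7 - √17) / 16 :=
  calc phiH9 p ≤ (1 - p) / 2 := phiH9_le_one_sub_div_two p
    _ < (1 - (1 + √17) / 8) / 2 := by linarith
    _ = (7 - √17) / 16 := peak_one_sub_div_two

end Peak

theorem phiH9_max : ∀ p ∈ Set.Icc (0 : ℝ) 1,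
    phiH9 p ≤ (7 - Real.sqrt 17) / 16 ∧
      (phiH9 p = (7 - Real.sqrt 17) / 16 ↔ p = (1 + Real.sqrt 17) / 8) := by
  rintro p ⟨hp, -⟩
  rcases lt_trichotomy p ((1 + Real.sqrt 17) / 8) with hlt | rfl | hgt
  · have hφ := phiH9_lt_of_lt_peak hp hlt
    exact ⟨hφ.le, iff_of_false hφ.ne hlt.ne⟩
  · exact ⟨phiH9_peak.le, iff_of_true phiH9_peak rfl⟩
  · have hφ := phiH9_lt_of_peak_lt hgt
    exact ⟨hφ.le, iff_of_false hφ.ne hgt.ne'⟩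
end

section
/- If H is a split graph, then the chromatic number of H equals the clique number of H, and the chromatic number of the complement of H equals the independence number of H. -/
/-!
Take a split partition of `G` whose clique part `s` is maximal. Every vertex outside `s` then has
a non-neighbour in `s`, since otherwise it could be moved into the clique. Colouring each vertex
of `s` by itself and every other vertex by such a non-neighbour is proper, because the vertices
outside `s` are pairwise non-adjacent. Hence `χ(G) ≤ |s| ≤ ω(G) ≤ χ(G)`. The complement of a
split graph is split, which gives the statement for `Gᶜ`.
-/

/-- A split graph: the vertex set can be partitioned into a clique and an independent set. -/
def IsSplit {α : Type*} (G : SimpleGraph α) : Prop :=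
  ∃ C : Set α, G.IsClique C ∧ Gᶜ.IsClique Cᶜ

/-- The independence number: the clique number of the complement. -/
noncomputable def indepNum {α : Type*} (G : SimpleGraph α) : ℕ := Gᶜ.cliqueNum

open Finset

namespace SimpleGraph

variable {V : Type*} {G : SimpleGraph V}

lemma colorable_of_forall_exists_not_adj {s : Finset V} (hsc : Gᶜ.IsClique (s : Set V)ᶜ)
    (hs : ∀ v ∉ s, ∃ u ∈ s, ¬ G.Adj v u) : G.Colorable #s := by
  classical
  choose f hfs hf using hs
  let c : V → s := fun v ↦ if hv : v ∈ s then ⟨v, hv⟩ else ⟨f v hv, hfs v hv⟩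
  have hc : ∀ {v w}, G.Adj v w → c v ≠ c w := by
    intro v w hvw
    by_cases hv : v ∈ s <;> by_cases hw : w ∈ s <;>
      simp only [c, hv, hw, dite_true, dite_false, ne_eq, Subtype.mk.injEq]
    · exact hvw.ne
    · exact fun h ↦ hf w hw (h ▸ hvw.symm)
    · exact fun h ↦ hf v hv (h ▸ hvw)
    · exact ((hsc hv hw hvw.ne).2 hvw).elim
  simpa using (Coloring.mk c hc).colorable

end SimpleGraph

section SplitPartition

variable {V : Type*} {G : SimpleGraph V}

def IsSplitPartition (G : SimpleGraph V) (s : Set V) : Prop :=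
  G.IsClique s ∧ Gᶜ.IsClique sᶜ

lemma IsSplit.compl (h : IsSplit G) : IsSplit Gᶜ := by
  obtain ⟨s, hs, hsc⟩ := h
  exact ⟨sᶜ, hsc, by rwa [compl_compl, compl_compl]⟩

lemma IsSplit.exists_maximal_isSplitPartition [Finite V] (h : IsSplit G) :
    ∃ s : Finset V, Maximal (fun t : Finset V ↦ IsSplitPartition G t) s := by
  obtain ⟨s, hs⟩ := h
  obtain ⟨t, -, ht⟩ := Finite.exists_le_maximal (p := fun t : Finset V ↦ IsSplitPartition G t)
    (a := s.toFinite.toFinset) (by rwa [Set.Finite.coe_toFinset])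
  exact ⟨t, ht⟩

lemma exists_not_adj_of_maximal_isSplitPartition {s : Finset V}
    (hs : Maximal (fun t : Finset V ↦ IsSplitPartition G t) s) {v : V} (hv : v ∉ s) :
    ∃ u ∈ s, ¬ G.Adj v u := by
  classical
  by_contra! hadj
  have hins : IsSplitPartition G ↑(insert v s) := by
    rw [coe_insert]
    exact ⟨hs.1.1.insert fun u hu _ ↦ hadj u hu,
      hs.1.2.subset (Set.compl_subset_compl.2 (Set.subset_insert v s))⟩
  exact hv (hs.2 hins (subset_insert v s) (mem_insert_self v s))

lemma IsSplit.chromaticNumber_eq_cliqueNum [Finite V] (h : IsSplit G) :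
    G.chromaticNumber = G.cliqueNum := by
  obtain ⟨s, hs⟩ := h.exists_maximal_isSplitPartition
  have hcol : G.Colorable #s := SimpleGraph.colorable_of_forall_exists_not_adj hs.1.2
    fun _ ↦ exists_not_adj_of_maximal_isSplitPartition hs
  refine le_antisymm ?_ G.cliqueNum_le_chromaticNumber
  calc G.chromaticNumber ≤ #s := hcol.chromaticNumber_le
    _ ≤ G.cliqueNum := Nat.cast_le.2 hs.1.1.card_le_cliqueNum

end SplitPartition

theorem split_graph_chromatic_eq_clique {V : Type*} [Fintype V] (G : SimpleGraph V)
    (hsplit : IsSplit G) :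
    G.chromaticNumber = (G.cliqueNum : ℕ∞) ∧
      Gᶜ.chromaticNumber = (indepNum G : ℕ∞) :=
  ⟨hsplit.chromaticNumber_eq_cliqueNum, hsplit.compl.chromaticNumber_eq_cliqueNum⟩
end
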